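/- arXiv:2303.05468 — 4 statements merged into one kernel-verified Lean document; each statement's English description precedes it below -/
import Mathlib

section
/- Let n ≥ 4. The subgroups of index two of the quasi-abelian group QA_n are exactly the three subgroups H_1 = ⟨x^2, y⟩, H_2 = ⟨x⟩ and H_3 = ⟨yx⟩; moreover H_1 ≅ C_{2^{n-2}} × C_2, and H_2 ≅ H_3 ≅ C_{2^{n-1}}. -/
/-!
`QA_n` is the semidirect product `C_{2^(n-1)} ⋊ C_2` in which the generator of `C_2` acts by
multiplication with `2^(n-2) + 1`, a unit of order two modulo `2^(n-1)`; homomorphisms in both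
directions between the presentation and this model give `|QA_n| = 2^n` and `ord x = 2^(n-1)`.

In a group generated by `x` and `y`, a subgroup `K` of index two contains `x`, or contains `y`
and hence `x²`, or contains neither and hence `yx`. Each of `⟨x⟩`, `⟨x², y⟩`, `⟨yx⟩` already
has index two, so `K` is one of them. The indices come from orders: `(yx)² = x^(2^(n-2)+2)` has
order `2^(n-2)` once `n ≥ 4`, so `ord (yx) = 2^(n-1)`; and `x²` commutes with `y` while
`⟨x²⟩ ∩ ⟨y⟩ = 1` because `y ∉ ⟨x⟩`, so `⟨x², y⟩ ≅ ⟨x²⟩ × ⟨y⟩ ≅ C_{2^(n-2)} × C_2`.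
-/

/-- The relators of the quasi-abelian group `QA_n`:
`x^(2^(n-1)) = 1`, `y^2 = 1`, `y * x * y⁻¹ = x^(2^(n-2)+1)`.
The generator `x` is encoded by `true` and `y` by `false`. -/
def qaRels (n : ℕ) : Set (FreeGroup Bool) :=
  {FreeGroup.of true ^ 2 ^ (n - 1),
   FreeGroup.of false ^ 2,
   FreeGroup.of false * FreeGroup.of true * (FreeGroup.of false)⁻¹ *
     (FreeGroup.of true ^ (2 ^ (n - 2) + 1))⁻¹}

/-- The quasi-abelian group `QA_n`, given by the presentation
`⟨x, y ∣ x^(2^(n-1)) = y^2 = 1, y x y⁻¹ = x^(2^(n-2)+1)⟩`. -/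
abbrev QA (n : ℕ) : Type := PresentedGroup (qaRels n)

/-- The generator `x` of `QA_n`. -/
def qx (n : ℕ) : QA n := PresentedGroup.of true

/-- The generator `y` of `QA_n`. -/
def qy (n : ℕ) : QA n := PresentedGroup.of false

/-- The index-two subgroup `H₁ = ⟨x², y⟩` of `QA_n`. -/
def H1 (n : ℕ) : Subgroup (QA n) := Subgroup.closure {qx n ^ 2, qy n}

open Subgroup Multiplicative SemidirectProduct

section ZModLift

variable {G : Type*} [Group G]

def zmodLift {N : ℕ} [NeZero N] (g : G) (hg : g ^ N = 1) : Multiplicative (ZMod N) →* G where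
  toFun a := g ^ (toAdd a).val
  map_one' := by simp
  map_mul' a b := by rw [toAdd_mul, ZMod.val_add, ← pow_eq_pow_mod _ hg, pow_add]

theorem zmodLift_ofAdd_natCast {N : ℕ} [NeZero N] (g : G) (hg : g ^ N = 1) (k : ℕ) :
    zmodLift g hg (ofAdd (k : ZMod N)) = g ^ k :=
  (pow_eq_pow_mod k hg).symm ▸ congrArg (g ^ ·) (ZMod.val_natCast N k)

theorem zmodLift_ofAdd_one {N : ℕ} [NeZero N] (g : G) (hg : g ^ N = 1) :
    zmodLift g hg (ofAdd 1) = g := by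
  simpa using zmodLift_ofAdd_natCast g hg 1

theorem MonoidHom.ext_multiplicative_zmod {N : ℕ} {f₁ f₂ : Multiplicative (ZMod N) →* G}
    (h : f₁ (ofAdd 1) = f₂ (ofAdd 1)) : f₁ = f₂ := by
  refine MonoidHom.ext fun a => ?_
  obtain ⟨k, hk⟩ := ZMod.intCast_surjective (toAdd a)
  have ha : a = ofAdd (1 : ZMod N) ^ k := by rw [← ofAdd_zsmul, zsmul_one, hk, ofAdd_toAdd]
  rw [ha, map_zpow, map_zpow, h]

end ZModLift

section GroupFacts

variable {G : Type*} [Group G]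

theorem Subgroup.eq_of_le_of_index_eq {H K : Subgroup G} (hle : H ≤ K) (hidx : H.index = K.index)
    (hK : K.index ≠ 0) : H = K := by
  have hrel := relIndex_mul_index hle
  rw [hidx, mul_eq_right₀ hK] at hrel
  exact le_antisymm hle (relIndex_eq_one.mp hrel)

theorem Subgroup.index_eq_two_of_card_mul_two {H : Subgroup G} (hH : Nat.card H ≠ 0)
    (h : Nat.card H * 2 = Nat.card G) : H.index = 2 :=
  Nat.eq_of_mul_eq_mul_left (Nat.pos_of_ne_zero hH) ((card_mul_index H).trans h.symm)

theorem Subgroup.index_closure_singleton_eq_two {g : G} (hg : orderOf g ≠ 0)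
    (h : orderOf g * 2 = Nat.card G) : (closure {g}).index = 2 := by
  rw [← zpowers_eq_closure]
  exact index_eq_two_of_card_mul_two (by rwa [Nat.card_zpowers]) (by rwa [Nat.card_zpowers])

theorem Subgroup.index_eq_two_iff_of_closure_pair_eq_top {x y : G} (hgen : closure {x, y} = ⊤)
    (h₁ : (closure {x ^ 2, y}).index = 2) (h₂ : (closure {x}).index = 2)
    (h₃ : (closure {y * x}).index = 2) (K : Subgroup G) :
    K.index = 2 ↔ K = closure {x ^ 2, y} ∨ K = closure {x} ∨ K = closure {y * x} := by
  refine ⟨fun hK => ?_, by rintro (rfl | rfl | rfl) <;> assumption⟩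
  have of_le : ∀ L : Subgroup G, L.index = 2 → L ≤ K → K = L := fun L hL hLK =>
    (eq_of_le_of_index_eq hLK (hL.trans hK.symm) (by omega)).symm
  by_cases hx : x ∈ K <;> by_cases hy : y ∈ K
  · have hKtop : K = ⊤ :=
      top_le_iff.mp (hgen ▸ (closure_le K).mpr (by simp [Set.insert_subset_iff, hx, hy]))
    simp [hKtop] at hK
  · exact Or.inr (Or.inl (of_le _ h₂ ((closure_le K).mpr (by simpa using hx))))
  · exact Or.inl (of_le _ h₁ ((closure_le K).mpr (by
      simp [Set.insert_subset_iff, sq_mem_of_index_two hK, hy])))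
  · have hyx : y * x ∈ K := (mul_mem_iff_of_index_two hK).mpr (iff_of_false hy hx)
    exact Or.inr (Or.inr (of_le _ h₃ ((closure_le K).mpr (by simpa using hyx))))

theorem Subgroup.disjoint_zpowers_of_sq_eq_one {A : Subgroup G} {b : G} (hb : b ^ 2 = 1)
    (hbA : b ∉ A) : Disjoint A (zpowers b) := by
  rw [disjoint_def]
  rintro _ hA ⟨k, rfl⟩
  dsimp only at hA ⊢
  rw [zpow_eq_zpow_emod' k hb] at hA ⊢
  rcases Int.emod_two_eq_zero_or_one k with h | h
  · rw [Nat.cast_ofNat, h, zpow_zero]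
  · rw [Nat.cast_ofNat, h, zpow_one] at hA
    exact absurd hA hbA

theorem nonempty_closure_singleton_mulEquiv_zmod (g : G) :
    Nonempty (closure {g} ≃* Multiplicative (ZMod (orderOf g))) := by
  rw [← zpowers_eq_closure]
  exact ⟨(zmodMulEquivOfGenerator (g := (⟨g, mem_zpowers g⟩ : zpowers g))
    (fun ⟨_, k, hk⟩ => ⟨k, Subtype.ext hk⟩) (Nat.card_zpowers g)).symm⟩

theorem nonempty_closure_pair_mulEquiv_prod {a b : G} (hab : Commute a b)
    (hdisj : Disjoint (zpowers a) (zpowers b)) :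
    Nonempty (closure {a, b} ≃*
      Multiplicative (ZMod (orderOf a)) × Multiplicative (ZMod (orderOf b))) := by
  let f := (zpowers a).subtype.noncommCoprod (zpowers b).subtype <| by
    rintro ⟨_, i, rfl⟩ ⟨_, j, rfl⟩
    exact hab.zpow_zpow i j
  have hinj : Function.Injective f :=
    (MonoidHom.noncommCoprod_injective _ _ _).mpr ⟨subtype_injective _, subtype_injective _, by
      simpa only [range_subtype] using hdisj⟩
  have hrange : f.range = closure {a, b} := by
    rw [MonoidHom.noncommCoprod_range, range_subtype, range_subtype, zpowers_eq_closure,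
      zpowers_eq_closure, ← Subgroup.closure_union, Set.singleton_union]
  obtain ⟨ea⟩ := nonempty_closure_singleton_mulEquiv_zmod a
  obtain ⟨eb⟩ := nonempty_closure_singleton_mulEquiv_zmod b
  rw [← zpowers_eq_closure] at ea eb
  exact ⟨((MonoidHom.ofInjective hinj).trans (MulEquiv.subgroupCongr hrange)).symm.trans
    (ea.prodCongr eb)⟩

end GroupFacts

section Metacyclic

def metacyclicRels (N k : ℕ) : Set (FreeGroup Bool) :=
  {FreeGroup.of true ^ N, FreeGroup.of false ^ 2,
   FreeGroup.of false * FreeGroup.of true * (FreeGroup.of false)⁻¹ * (FreeGroup.of true ^ k)⁻¹}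

variable {N k : ℕ}

local notation "P" => PresentedGroup (metacyclicRels N k)

theorem metacyclic_of_true_pow : (PresentedGroup.of true : P) ^ N = 1 :=
  (map_pow _ _ _).symm.trans (PresentedGroup.one_of_mem (by simp [metacyclicRels]))

theorem metacyclic_of_false_sq : (PresentedGroup.of false : P) ^ 2 = 1 :=
  (map_pow _ _ _).symm.trans (PresentedGroup.one_of_mem (by simp [metacyclicRels]))

theorem metacyclic_conj : (PresentedGroup.of false * PresentedGroup.of true *
    (PresentedGroup.of false)⁻¹ : P) = PresentedGroup.of true ^ k := by
  rw [← mul_inv_eq_one]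
  exact PresentedGroup.one_of_mem (x := FreeGroup.of false * FreeGroup.of true *
    (FreeGroup.of false)⁻¹ * (FreeGroup.of true ^ k)⁻¹) (by simp [metacyclicRels])

variable [NeZero N] (hk : (k : ZMod N) * k = 1)

def metacyclicAction : Multiplicative (ZMod 2) →* MulAut (Multiplicative (ZMod N)) :=
  (MulAutMultiplicative (ZMod N)).symm.toMonoidHom.comp <| AddAut.mulLeft.comp <|
    zmodLift (Units.mkOfMulEqOne _ _ hk) (Units.ext (by simp [sq, hk]))

theorem metacyclicAction_ofAdd_one (a : ZMod N) :
    metacyclicAction hk (ofAdd 1) (ofAdd a) = ofAdd (k * a) := by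
  simp only [metacyclicAction, MonoidHom.comp_apply, zmodLift_ofAdd_one]
  rfl

abbrev MetacyclicModel := Multiplicative (ZMod N) ⋊[metacyclicAction hk] Multiplicative (ZMod 2)

theorem inl_ofAdd_one_pow_natCast (m : ℕ) :
    (inl (ofAdd 1) : MetacyclicModel hk) ^ m = inl (ofAdd (m : ZMod N)) := by
  rw [← map_pow, ← ofAdd_nsmul, nsmul_one]

theorem inr_ofAdd_one_pow_natCast (m : ℕ) :
    (inr (ofAdd 1) : MetacyclicModel hk) ^ m = inr (ofAdd (m : ZMod 2)) := by
  rw [← map_pow, ← ofAdd_nsmul, nsmul_one]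

theorem inl_ofAdd_one_pow_self : (inl (ofAdd 1) : MetacyclicModel hk) ^ N = 1 := by
  rw [inl_ofAdd_one_pow_natCast, ZMod.natCast_self, ofAdd_zero, map_one]

theorem inr_ofAdd_one_sq : (inr (ofAdd 1) : MetacyclicModel hk) ^ 2 = 1 := by
  rw [inr_ofAdd_one_pow_natCast]
  rfl

theorem inr_mul_inl_mul_inr_inv :
    (inr (ofAdd 1) * inl (ofAdd 1) * (inr (ofAdd 1))⁻¹ : MetacyclicModel hk) =
      inl (ofAdd 1) ^ k := by
  rw [← map_inv, ← inl_aut, metacyclicAction_ofAdd_one, mul_one, inl_ofAdd_one_pow_natCast]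

def toModel : P →* MetacyclicModel hk :=
  PresentedGroup.toGroup (f := fun b => cond b (inl (ofAdd 1)) (inr (ofAdd 1))) <| by
    simp only [metacyclicRels, Set.mem_insert_iff, Set.mem_singleton_iff]
    rintro r (rfl | rfl | rfl)
    · simpa using inl_ofAdd_one_pow_self hk
    · simpa using inr_ofAdd_one_sq hk
    · simpa [mul_inv_eq_one] using inr_mul_inl_mul_inr_inv hk

theorem toModel_of_true : toModel hk (PresentedGroup.of true) = inl (ofAdd 1) :=
  PresentedGroup.toGroup.of _

theorem toModel_of_false : toModel hk (PresentedGroup.of false) = inr (ofAdd 1) :=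
  PresentedGroup.toGroup.of _

def ofModel : MetacyclicModel hk →* P :=
  lift (zmodLift _ metacyclic_of_true_pow) (zmodLift _ metacyclic_of_false_sq) <| by
    have hC₂ : ∀ g : Multiplicative (ZMod 2), g = 1 ∨ g = ofAdd 1 := by decide
    intro g
    rcases hC₂ g with rfl | rfl
    · exact MonoidHom.ext fun _ => by simp
    · refine MonoidHom.ext_multiplicative_zmod ?_
      simp [metacyclicAction_ofAdd_one, zmodLift_ofAdd_one, zmodLift_ofAdd_natCast,
        metacyclic_conj]

def metacyclicEquiv : P ≃* MetacyclicModel hk :=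
  (toModel hk).toMulEquiv (ofModel hk)
    (PresentedGroup.ext fun b => by
      cases b <;> simp [toModel_of_true, toModel_of_false, ofModel, zmodLift_ofAdd_one])
    (hom_ext
      (MonoidHom.ext_multiplicative_zmod (by simp [ofModel, zmodLift_ofAdd_one, toModel_of_true]))
      (MonoidHom.ext_multiplicative_zmod (by simp [ofModel, zmodLift_ofAdd_one, toModel_of_false])))

theorem card_metacyclic (hk : (k : ZMod N) * k = 1) : Nat.card P = N * 2 := by
  rw [Nat.card_congr (metacyclicEquiv hk).toEquiv, SemidirectProduct.card]
  simp

theorem orderOf_metacyclic_of_true (hk : (k : ZMod N) * k = 1) :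
    orderOf (PresentedGroup.of true : P) = N := by
  rw [← MulEquiv.orderOf_eq (metacyclicEquiv hk)]
  change orderOf (toModel hk _) = N
  rw [toModel_of_true, orderOf_injective _ inl_injective, orderOf_ofAdd_eq_addOrderOf,
    ZMod.addOrderOf_one]

end Metacyclic

section QuasiAbelian

variable {n : ℕ}

theorem two_pow_sub_two_mul_two (hn : 2 ≤ n) : 2 ^ (n - 2) * 2 = 2 ^ (n - 1) := by
  rw [← pow_succ]
  congr 1
  omega

theorem natCast_qaTwist_mul_self (hn : 3 ≤ n) :
    ((2 ^ (n - 2) + 1 : ℕ) : ZMod (2 ^ (n - 1))) * ((2 ^ (n - 2) + 1 : ℕ) : ZMod (2 ^ (n - 1)))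
      = 1 := by
  obtain ⟨j, rfl⟩ := Nat.exists_eq_add_of_le' hn
  rw [show j + 3 - 2 = j + 1 by omega, show j + 3 - 1 = j + 2 by omega, ← Nat.cast_mul,
    show (2 ^ (j + 1) + 1) * (2 ^ (j + 1) + 1) = 2 ^ (j + 2) * (2 ^ j + 1) + 1 by ring,
    Nat.cast_add, Nat.cast_mul, ZMod.natCast_self, zero_mul, zero_add, Nat.cast_one]

-- `QA n` unfolds to the metacyclic presentation with `N = 2^(n-1)` and `k = 2^(n-2) + 1`.
theorem card_qa (hn : 3 ≤ n) : Nat.card (QA n) = 2 ^ (n - 1) * 2 :=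
  card_metacyclic (natCast_qaTwist_mul_self hn)

theorem orderOf_qx (hn : 3 ≤ n) : orderOf (qx n) = 2 ^ (n - 1) :=
  orderOf_metacyclic_of_true (natCast_qaTwist_mul_self hn)

theorem qx_pow_two_pow : qx n ^ 2 ^ (n - 1) = 1 := metacyclic_of_true_pow

theorem qy_sq : qy n ^ 2 = 1 := metacyclic_of_false_sq

theorem qy_mul_qx_mul_qy_inv : qy n * qx n * (qy n)⁻¹ = qx n ^ (2 ^ (n - 2) + 1) :=
  metacyclic_conj

theorem closure_qx_qy : closure {qx n, qy n} = ⊤ :=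
  eq_top_iff.mpr fun g _ => PresentedGroup.generated_by _ _
    (fun b => subset_closure (by cases b <;> simp [qx, qy])) g

theorem qy_notMem_zpowers_qx (hn : 3 ≤ n) : qy n ∉ zpowers (qx n) := by
  intro hy
  have htop : zpowers (qx n) = ⊤ :=
    top_le_iff.mp (closure_qx_qy ▸ (closure_le _).mpr (by simp [Set.insert_subset_iff, hy]))
  have hcard := card_top (G := QA n)
  rw [← htop, Nat.card_zpowers, orderOf_qx hn, card_qa hn] at hcard
  have : 0 < 2 ^ (n - 1) := by positivity
  omega

theorem orderOf_qy (hn : 3 ≤ n) : orderOf (qy n) = 2 :=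
  orderOf_eq_prime qy_sq fun h => qy_notMem_zpowers_qx hn (h ▸ one_mem _)

theorem orderOf_qx_sq (hn : 3 ≤ n) : orderOf (qx n ^ 2) = 2 ^ (n - 2) := by
  obtain ⟨j, rfl⟩ := Nat.exists_eq_add_of_le' hn
  rw [orderOf_pow_of_dvd two_ne_zero (by rw [orderOf_qx hn]; exact dvd_pow_self 2 (by omega)),
    orderOf_qx hn, show j + 3 - 1 = (j + 1) + 1 by omega, pow_succ, Nat.mul_div_cancel _ two_pos]
  rfl

theorem commute_qx_sq_qy (hn : 2 ≤ n) : Commute (qx n ^ 2) (qy n) := by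
  have hconj : qy n * qx n ^ 2 * (qy n)⁻¹ = qx n ^ 2 := by
    rw [← conj_pow, qy_mul_qx_mul_qy_inv, ← pow_mul, add_mul, one_mul,
      two_pow_sub_two_mul_two hn, pow_add, qx_pow_two_pow, one_mul]
  exact (mul_inv_eq_iff_eq_mul.mp hconj).symm

theorem qy_mul_qx_sq : (qy n * qx n) ^ 2 = qx n ^ (2 ^ (n - 2) + 2) := by
  have h : (qy n * qx n) ^ 2 = qy n * qx n * (qy n)⁻¹ * qy n ^ 2 * qx n := by
    rw [sq, sq]; group
  rw [h, qy_mul_qx_mul_qy_inv, qy_sq, mul_one, ← pow_succ]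

theorem orderOf_qy_mul_qx (hn : 4 ≤ n) : orderOf (qy n * qx n) = 2 ^ (n - 1) := by
  obtain ⟨j, rfl⟩ := Nat.exists_eq_add_of_le' hn
  have hpow : ∀ m, (qy (j + 4) * qx (j + 4)) ^ (2 * m) = qx (j + 4) ^ ((2 ^ (j + 2) + 2) * m) :=
    fun m => by rw [pow_mul, qy_mul_qx_sq, ← pow_mul]; rfl
  have hx : ∀ m, qx (j + 4) ^ m = 1 ↔ 2 ^ (j + 3) ∣ m := fun m => by
    rw [← orderOf_dvd_iff_pow_eq_one, orderOf_qx (by omega)]; rfl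
  rw [show j + 4 - 1 = j + 2 + 1 by omega]
  refine orderOf_eq_prime_pow ?_ ?_
  · rw [show 2 ^ (j + 2) = 2 * 2 ^ (j + 1) by ring, hpow, hx,
      show (2 ^ (j + 2) + 2) * 2 ^ (j + 1) = 2 ^ (j + 3) * 2 ^ j + 2 ^ (j + 2) by ring,
      Nat.dvd_add_right (dvd_mul_right _ _), Nat.pow_dvd_pow_iff_le_right (by norm_num)]
    omega
  · rw [show 2 ^ (j + 2 + 1) = 2 * 2 ^ (j + 2) by ring, hpow, hx,
      show (2 ^ (j + 2) + 2) * 2 ^ (j + 2) = 2 ^ (j + 3) * (2 ^ (j + 1) + 1) by ring]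
    exact dvd_mul_right _ _

theorem nonempty_H1_mulEquiv (hn : 3 ≤ n) :
    Nonempty (H1 n ≃* Multiplicative (ZMod (2 ^ (n - 2))) × Multiplicative (ZMod 2)) := by
  have hy : qy n ∉ zpowers (qx n ^ 2) := fun h =>
    qy_notMem_zpowers_qx hn (zpowers_le.mpr (pow_mem (mem_zpowers _) 2) h)
  obtain ⟨e⟩ := nonempty_closure_pair_mulEquiv_prod (commute_qx_sq_qy (by omega))
    (disjoint_zpowers_of_sq_eq_one qy_sq hy)
  rw [orderOf_qx_sq hn, orderOf_qy hn] at e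
  exact ⟨e⟩

theorem index_H1 (hn : 3 ≤ n) : (H1 n).index = 2 := by
  obtain ⟨e⟩ := nonempty_H1_mulEquiv hn
  have hcard : Nat.card (H1 n) = 2 ^ (n - 1) := by
    simp [Nat.card_congr e.toEquiv, two_pow_sub_two_mul_two (show 2 ≤ n by omega)]
  exact index_eq_two_of_card_mul_two (by rw [hcard]; positivity) (by rw [hcard, card_qa hn])

theorem index_closure_qx (hn : 3 ≤ n) : (closure {qx n}).index = 2 :=
  index_closure_singleton_eq_two (by rw [orderOf_qx hn]; positivity)
    (by rw [orderOf_qx hn, card_qa hn])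

theorem index_closure_qy_mul_qx (hn : 4 ≤ n) : (closure {qy n * qx n}).index = 2 :=
  index_closure_singleton_eq_two (by rw [orderOf_qy_mul_qx hn]; positivity)
    (by rw [orderOf_qy_mul_qx hn, card_qa (by omega)])

end QuasiAbelian

/-- For `n ≥ 4`, the index-two subgroups of `QA_n` are exactly
`H₁ = ⟨x², y⟩`, `H₂ = ⟨x⟩` and `H₃ = ⟨yx⟩`; moreover `H₁ ≅ C_(2^(n-2)) × C_2` and
`H₂ ≅ H₃ ≅ C_(2^(n-1))`. -/
theorem stmt3 (n : ℕ) (hn : 4 ≤ n) :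
    (∀ H : Subgroup (QA n), H.index = 2 ↔
        (H = H1 n ∨ H = Subgroup.closure {qx n} ∨ H = Subgroup.closure {qy n * qx n})) ∧
    Nonempty ((H1 n) ≃* Multiplicative (ZMod (2 ^ (n - 2))) × Multiplicative (ZMod 2)) ∧
    Nonempty ((Subgroup.closure {qx n} : Subgroup (QA n)) ≃*
      Multiplicative (ZMod (2 ^ (n - 1)))) ∧
    Nonempty ((Subgroup.closure {qy n * qx n} : Subgroup (QA n)) ≃*
      Multiplicative (ZMod (2 ^ (n - 1)))) := by
  have hn3 : 3 ≤ n := by omega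
  refine ⟨index_eq_two_iff_of_closure_pair_eq_top closure_qx_qy (index_H1 hn3)
    (index_closure_qx hn3) (index_closure_qy_mul_qx hn), nonempty_H1_mulEquiv hn3, ?_, ?_⟩
  · exact orderOf_qx hn3 ▸ nonempty_closure_singleton_mulEquiv_zmod (qx n)
  · exact orderOf_qy_mul_qx hn ▸ nonempty_closure_singleton_mulEquiv_zmod (qy n * qx n)
end

section
/- Let n ≥ 4. For each odd integer u with 0 < u < 2^{n-1}, each a ∈ {0,1} and each v ∈ {0, 2^{n-2}}, the assignment x ↦ y^a x^u, y ↦ y x^v extends to an automorphism ψ_{u,a,v} of the quasi-abelian group QA_n; every automorphism of QA_n is of this form; these 2^n automorphisms are pairwise distinct; and consequently the automorphism group Aut(QA_n) has order 2^n. -/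
lemma Nat.two_pow_sub_one_eq {n : ℕ} (hn : 2 ≤ n) : 2 ^ (n - 1) = 2 * 2 ^ (n - 2) := by
  rw [← pow_succ']; congr 1; omega

lemma ZMod.two_pow_eq_zero {m k : ℕ} (hk : m ≤ k) : (2 : ZMod (2 ^ m)) ^ k = 0 := by
  exact_mod_cast (ZMod.natCast_eq_zero_iff _ _).mpr (pow_dvd_pow 2 hk)

/-- `⟨α, b⟩` is the affine map `z ↦ z * α + b`; in `p * q` the map `p` is applied first. -/
@[ext] structure AffineGroup (R : Type*) [CommRing R] where
  scale : Rˣ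
  shift : R

namespace AffineGroup

variable {R : Type*} [CommRing R]

instance : Mul (AffineGroup R) := ⟨fun p q => ⟨p.scale * q.scale, p.shift * q.scale + q.shift⟩⟩
instance : One (AffineGroup R) := ⟨⟨1, 0⟩⟩
instance : Inv (AffineGroup R) := ⟨fun p => ⟨p.scale⁻¹, -(p.shift * ↑p.scale⁻¹)⟩⟩

@[simp] lemma mul_scale (p q : AffineGroup R) : (p * q).scale = p.scale * q.scale := rfl
@[simp] lemma mul_shift (p q : AffineGroup R) : (p * q).shift = p.shift * q.scale + q.shift := rfl
@[simp] lemma one_scale : (1 : AffineGroup R).scale = 1 := rfl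
@[simp] lemma one_shift : (1 : AffineGroup R).shift = 0 := rfl
@[simp] lemma inv_scale (p : AffineGroup R) : p⁻¹.scale = p.scale⁻¹ := rfl
@[simp] lemma inv_shift (p : AffineGroup R) : p⁻¹.shift = -(p.shift * ↑p.scale⁻¹) := rfl

instance : Group (AffineGroup R) where
  mul_assoc p q r := by ext <;> simp [mul_assoc, add_mul, add_assoc]
  one_mul p := by ext <;> simp
  mul_one p := by ext <;> simp
  inv_mul_cancel p := by ext <;> simp [mul_assoc]

lemma mk_one_pow (b : R) (k : ℕ) : (⟨1, b⟩ : AffineGroup R) ^ k = ⟨1, k * b⟩ := by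
  induction k with
  | zero => ext <;> simp
  | succ k ih => ext <;> simp [pow_succ, ih, add_mul]

lemma mk_zero_pow (α : Rˣ) (k : ℕ) : (⟨α, 0⟩ : AffineGroup R) ^ k = ⟨α ^ k, 0⟩ := by
  induction k with
  | zero => ext <;> simp
  | succ k ih => ext <;> simp [pow_succ, ih]

end AffineGroup

namespace QA

variable {n : ℕ}

def lift {G : Type*} [Group G] (X Y : G) (hX : X ^ 2 ^ (n - 1) = 1) (hY : Y ^ 2 = 1)
    (hYX : Y * X * Y⁻¹ = X ^ (2 ^ (n - 2) + 1)) : QA n →* G :=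
  PresentedGroup.toGroup (f := fun b => bif b then X else Y) <| by
    rintro r (rfl | rfl | rfl) <;> simp [hX, hY, hYX]

section lift

variable {G : Type*} [Group G] {X Y : G} (hX : X ^ 2 ^ (n - 1) = 1) (hY : Y ^ 2 = 1)
  (hYX : Y * X * Y⁻¹ = X ^ (2 ^ (n - 2) + 1))

@[simp] lemma lift_qx : lift X Y hX hY hYX (qx n) = X := PresentedGroup.toGroup.of _
@[simp] lemma lift_qy : lift X Y hX hY hYX (qy n) = Y := PresentedGroup.toGroup.of _

end lift

lemma hom_ext {G : Type*} [Group G] {φ ψ : QA n →* G} (hx : φ (qx n) = ψ (qx n))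
    (hy : φ (qy n) = ψ (qy n)) : φ = ψ :=
  PresentedGroup.ext fun b => by cases b <;> assumption

lemma qx_pow_two_pow_sub_one : qx n ^ 2 ^ (n - 1) = 1 := by
  simpa [qx, PresentedGroup.of] using PresentedGroup.one_of_mem (rels := qaRels n) (Or.inl rfl)

lemma qy_sq : qy n ^ 2 = 1 := by
  simpa [qy, PresentedGroup.of] using
    PresentedGroup.one_of_mem (rels := qaRels n) (Or.inr (Or.inl rfl))

lemma qy_inv : (qy n)⁻¹ = qy n :=
  inv_eq_of_mul_eq_one_right (by rw [← sq, qy_sq])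

lemma qx_inv : (qx n)⁻¹ = qx n ^ (2 ^ (n - 1) - 1) :=
  inv_eq_of_mul_eq_one_right <| by
    rw [← pow_succ', Nat.sub_add_cancel Nat.one_le_two_pow, qx_pow_two_pow_sub_one]

lemma qy_mul_qx_mul_qy_inv : qy n * qx n * (qy n)⁻¹ = qx n ^ (2 ^ (n - 2) + 1) := by
  simpa [qx, qy, PresentedGroup.of, mul_inv_eq_one] using
    PresentedGroup.one_of_mem (rels := qaRels n) (Or.inr (Or.inr rfl))

lemma qy_mul_qx_pow_mul_qy_inv (k : ℕ) :
    qy n * qx n ^ k * (qy n)⁻¹ = qx n ^ (k * (2 ^ (n - 2) + 1)) := by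
  rw [← conj_pow, qy_mul_qx_mul_qy_inv, ← pow_mul, mul_comm]

lemma qx_pow_mul_qy (k : ℕ) : qx n ^ k * qy n = qy n * qx n ^ (k * (2 ^ (n - 2) + 1)) := by
  rw [← qy_mul_qx_pow_mul_qy_inv, qy_inv, ← mul_assoc, ← mul_assoc, ← sq, qy_sq, one_mul]

lemma exists_eq_qy_pow_mul_qx_pow (g : QA n) :
    ∃ a u, a ≤ 1 ∧ u < 2 ^ (n - 1) ∧ g = qy n ^ a * qx n ^ u := by
  have hg : g ∈ Subgroup.closure (Set.range PresentedGroup.of) := by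
    rw [PresentedGroup.closure_range_of]; trivial
  obtain ⟨a, u, rfl⟩ : ∃ a u, g = qy n ^ a * qx n ^ u := by
    induction hg using Subgroup.closure_induction_right with
    | one => exact ⟨0, 0, by simp⟩
    | mul_right _ _ _ hb ih =>
      obtain ⟨b, rfl⟩ := hb
      obtain ⟨a, u, rfl⟩ := ih
      cases b
      · exact ⟨a + 1, u * (2 ^ (n - 2) + 1), by
          rw [mul_assoc, ← qy, qx_pow_mul_qy, ← mul_assoc, ← pow_succ]⟩
      · exact ⟨a, u + 1, by rw [mul_assoc, ← qx, ← pow_succ]⟩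
    | mul_inv_cancel _ _ _ hb ih =>
      obtain ⟨b, rfl⟩ := hb
      obtain ⟨a, u, rfl⟩ := ih
      cases b
      · exact ⟨a + 1, u * (2 ^ (n - 2) + 1), by
          rw [mul_assoc, ← qy, qy_inv, qx_pow_mul_qy, ← mul_assoc, ← pow_succ]⟩
      · exact ⟨a, u + (2 ^ (n - 1) - 1), by rw [mul_assoc, ← qx, qx_inv, ← pow_add]⟩
  exact ⟨a % 2, u % 2 ^ (n - 1), Nat.le_of_lt_succ (Nat.mod_lt _ two_pos),
    Nat.mod_lt _ (by positivity),
    by rw [← pow_eq_pow_mod a qy_sq, ← pow_eq_pow_mod u qx_pow_two_pow_sub_one]⟩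

instance : Finite (QA n) :=
  Finite.of_surjective
    (fun p : Fin 2 × Fin (2 ^ (n - 1)) => qy n ^ (p.1 : ℕ) * qx n ^ (p.2 : ℕ)) fun g => by
      obtain ⟨a, u, ha, hu, rfl⟩ := exists_eq_qy_pow_mul_qx_pow g
      exact ⟨(⟨a, by omega⟩, ⟨u, hu⟩), rfl⟩

lemma one_add_two_pow_mul_self (hn : 3 ≤ n) :
    (1 + 2 ^ (n - 2) : ZMod (2 ^ (n - 1))) * (1 + 2 ^ (n - 2)) = 1 := by
  have h1 : (2 : ZMod (2 ^ (n - 1))) * 2 ^ (n - 2) = 0 := by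
    rw [← pow_succ']; exact ZMod.two_pow_eq_zero (by omega)
  have h2 : (2 : ZMod (2 ^ (n - 1))) ^ (n - 2) * 2 ^ (n - 2) = 0 := by
    rw [← pow_add]; exact ZMod.two_pow_eq_zero (by omega)
  linear_combination h1 + h2

def twist (hn : 3 ≤ n) : (ZMod (2 ^ (n - 1)))ˣ where
  val := 1 + 2 ^ (n - 2)
  inv := 1 + 2 ^ (n - 2)
  val_inv := one_add_two_pow_mul_self hn
  inv_val := one_add_two_pow_mul_self hn

lemma twist_ne_one (hn : 3 ≤ n) : twist hn ≠ 1 := by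
  intro h
  have h2 : (2 : ZMod (2 ^ (n - 1))) ^ (n - 2) = 0 := by
    simpa [twist, Units.ext_iff] using h
  have : 2 ^ (n - 1) ∣ 2 ^ (n - 2) := (ZMod.natCast_eq_zero_iff _ _).mp (by exact_mod_cast h2)
  have := Nat.pow_dvd_pow_iff_le_right (by norm_num : 1 < 2) |>.mp this
  omega

def toAffineGroup (hn : 3 ≤ n) : QA n →* AffineGroup (ZMod (2 ^ (n - 1))) :=
  lift ⟨1, 1⟩ ⟨twist hn, 0⟩
    (by rw [AffineGroup.mk_one_pow]; ext <;> simp)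
    (by rw [AffineGroup.mk_zero_pow]; ext <;> simp [twist, sq, one_add_two_pow_mul_self hn])
    (by rw [AffineGroup.mk_one_pow]; ext <;> simp [twist, one_add_two_pow_mul_self hn, add_comm])

lemma toAffineGroup_qy_pow_mul_qx_pow (hn : 3 ≤ n) (a u : ℕ) :
    toAffineGroup hn (qy n ^ a * qx n ^ u) = ⟨twist hn ^ a, u⟩ := by
  ext <;> simp [toAffineGroup, AffineGroup.mk_one_pow, AffineGroup.mk_zero_pow]

lemma eq_of_qy_pow_mul_qx_pow_eq (hn : 3 ≤ n) {a b u v : ℕ} (ha : a ≤ 1) (hb : b ≤ 1)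
    (hu : u < 2 ^ (n - 1)) (hv : v < 2 ^ (n - 1))
    (h : qy n ^ a * qx n ^ u = qy n ^ b * qx n ^ v) : a = b ∧ u = v := by
  have h' := congrArg (toAffineGroup hn) h
  simp only [toAffineGroup_qy_pow_mul_qx_pow, AffineGroup.mk.injEq] at h'
  refine ⟨?_, by
    simpa [ZMod.val_cast_of_lt hu, ZMod.val_cast_of_lt hv] using congrArg ZMod.val h'.2⟩
  have := twist_ne_one hn
  interval_cases a <;> interval_cases b <;> simp_all [eq_comm]

lemma qx_pow_eq_one_iff (hn : 3 ≤ n) {k : ℕ} : qx n ^ k = 1 ↔ 2 ^ (n - 1) ∣ k := by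
  refine ⟨fun h => Nat.dvd_of_mod_eq_zero ?_, fun ⟨c, hc⟩ => by
    rw [hc, pow_mul, qx_pow_two_pow_sub_one, one_pow]⟩
  refine (eq_of_qy_pow_mul_qx_pow_eq hn (a := 0) (b := 0) zero_le_one zero_le_one
    (Nat.mod_lt k (by positivity)) (by positivity : 0 < 2 ^ (n - 1)) ?_).2
  simpa [← pow_eq_pow_mod k qx_pow_two_pow_sub_one] using h

lemma commute_qx_pow (hn : 3 ≤ n) {v : ℕ} (hv : 2 ^ (n - 2) ∣ v) (g : QA n) :
    Commute (qx n ^ v) g := by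
  have hvs : qx n ^ (v * 2 ^ (n - 2)) = 1 := by
    obtain ⟨c, rfl⟩ := hv
    rw [qx_pow_eq_one_iff hn, Nat.two_pow_sub_one_eq (by omega), mul_assoc, mul_comm]
    exact mul_dvd_mul_left _ (dvd_mul_of_dvd_right (dvd_pow_self 2 (by omega)) c)
  have hy : qy n * qx n ^ v = qx n ^ v * qy n := by
    rw [qx_pow_mul_qy, mul_add, mul_one, pow_add, hvs, one_mul]
  have hg : g ∈ Subgroup.centralizer {qx n ^ v} := by
    refine PresentedGroup.generated_by _ _ (fun b => ?_) g
    cases b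
    · exact Subgroup.mem_centralizer_singleton_iff.2 hy
    · exact Subgroup.mem_centralizer_singleton_iff.2 (Commute.self_pow (qx n) v)
  exact (Subgroup.mem_centralizer_singleton_iff.1 hg).symm

lemma qy_mul_qx_pow_sq (u : ℕ) :
    (qy n * qx n ^ u) ^ 2 = qx n ^ (u * (2 ^ (n - 2) + 1) + u) := by
  rw [sq, mul_assoc, ← mul_assoc (qx n ^ u), qx_pow_mul_qy, mul_assoc, ← mul_assoc, ← sq, qy_sq,
    one_mul, pow_add]

lemma qy_mul_qx_pow_sq_eq_one (hn : 3 ≤ n) {v : ℕ} (hv : 2 ^ (n - 2) ∣ v) :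
    (qy n * qx n ^ v) ^ 2 = 1 := by
  rw [sq, mul_assoc, ← mul_assoc (qx n ^ v), (commute_qx_pow hn hv (qy n)).eq, mul_assoc,
    ← mul_assoc, ← sq, qy_sq, one_mul, ← pow_add, qx_pow_eq_one_iff hn,
    Nat.two_pow_sub_one_eq (by omega), ← two_mul]
  exact mul_dvd_mul_left 2 hv

lemma pow_two_pow_sub_two (hn : 4 ≤ n) {a : ℕ} (ha : a ≤ 1) (u : ℕ) :
    (qy n ^ a * qx n ^ u) ^ 2 ^ (n - 2) = qx n ^ (2 ^ (n - 2) * u) := by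
  interval_cases a
  · rw [pow_zero, one_mul, ← pow_mul, mul_comm]
  · have h2 : 2 ^ (n - 2) = 2 * 2 ^ (n - 3) := by rw [← pow_succ']; congr 1; omega
    have e : (u * (2 ^ (n - 2) + 1) + u) * 2 ^ (n - 3) =
        2 * 2 ^ (n - 3) * u + 2 ^ (n - 1) * (u * 2 ^ (n - 4)) := by
      obtain ⟨k, rfl⟩ : ∃ k, n = k + 4 := ⟨n - 4, by omega⟩
      simp only [Nat.reduceSubDiff]; ring
    rw [pow_one, h2, pow_mul, qy_mul_qx_pow_sq, ← pow_mul, e, pow_add, pow_mul (qx n) (2 ^ _),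
      qx_pow_two_pow_sub_one, one_pow, mul_one]

lemma pow_two_pow_sub_one (hn : 4 ≤ n) (g : QA n) : g ^ 2 ^ (n - 1) = 1 := by
  obtain ⟨a, u, ha, -, rfl⟩ := exists_eq_qy_pow_mul_qx_pow g
  rw [Nat.two_pow_sub_one_eq (by omega), mul_comm, pow_mul, pow_two_pow_sub_two hn ha, ← pow_mul,
    qx_pow_eq_one_iff (by omega), Nat.two_pow_sub_one_eq (by omega)]
  exact ⟨u, by ring⟩

lemma pow_two_pow_sub_two_eq_one_iff (hn : 4 ≤ n) {a : ℕ} (ha : a ≤ 1) {u : ℕ} :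
    (qy n ^ a * qx n ^ u) ^ 2 ^ (n - 2) = 1 ↔ Even u := by
  rw [pow_two_pow_sub_two hn ha, qx_pow_eq_one_iff (by omega), Nat.two_pow_sub_one_eq (by omega),
    mul_comm 2, Nat.mul_dvd_mul_iff_left (by positivity), even_iff_two_dvd]

lemma qy_mul_mul_qy_inv (hn : 4 ≤ n) (g : QA n) :
    qy n * g * (qy n)⁻¹ = g ^ (2 ^ (n - 2) + 1) := by
  obtain ⟨a, u, ha, -, rfl⟩ := exists_eq_qy_pow_mul_qx_pow g
  rw [pow_succ, pow_two_pow_sub_two hn ha, (commute_qx_pow (by omega) (dvd_mul_right _ _) _).eq,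
    ← mul_assoc, (Commute.self_pow (qy n) a).eq, mul_assoc, mul_assoc, ← mul_assoc (qy n),
    qy_mul_qx_pow_mul_qy_inv, mul_assoc, ← pow_add]
  congr 2
  ring

lemma qy_mul_qx_pow_conj (hn : 4 ≤ n) {v : ℕ} (hv : 2 ^ (n - 2) ∣ v) (g : QA n) :
    qy n * qx n ^ v * g * (qy n * qx n ^ v)⁻¹ = g ^ (2 ^ (n - 2) + 1) := by
  rw [mul_inv_rev, mul_assoc (qy n), (commute_qx_pow (by omega) hv g).eq,
    ← qy_mul_mul_qy_inv hn]
  group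

lemma dvd_of_qy_pow_mul_qx_pow_sq_eq_one (hn : 4 ≤ n) {b v : ℕ} (hb : b ≤ 1)
    (h : (qy n ^ b * qx n ^ v) ^ 2 = 1) : 2 ^ (n - 2) ∣ v := by
  interval_cases b
  · rw [pow_zero, one_mul, ← pow_mul, qx_pow_eq_one_iff (by omega),
      Nat.two_pow_sub_one_eq (by omega), mul_comm v] at h
    exact Nat.dvd_of_mul_dvd_mul_left two_pos (by rwa [mul_comm 2 (2 ^ _)] at h ⊢)
  · have e : v * (2 ^ (n - 2) + 1) + v = 2 * (v * (2 ^ (n - 3) + 1)) := by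
      obtain ⟨k, rfl⟩ : ∃ k, n = k + 4 := ⟨n - 4, by omega⟩
      simp only [Nat.reduceSubDiff]; ring
    rw [pow_one, qy_mul_qx_pow_sq, qx_pow_eq_one_iff (by omega),
      Nat.two_pow_sub_one_eq (by omega), e, Nat.mul_dvd_mul_iff_left two_pos] at h
    refine Nat.Coprime.dvd_of_dvd_mul_right ?_ h
    exact .pow_left _ (Nat.coprime_two_left.2 (Nat.even_pow.2 ⟨even_two, by omega⟩).add_one)

def endo (hn : 4 ≤ n) (X : QA n) {v : ℕ} (hv : 2 ^ (n - 2) ∣ v) : QA n →* QA n :=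
  lift X (qy n * qx n ^ v) (pow_two_pow_sub_one hn X) (qy_mul_qx_pow_sq_eq_one (by omega) hv)
    (qy_mul_qx_pow_conj hn hv X)

lemma endo_surjective (hn : 4 ≤ n) {a u v : ℕ} (ha : a ≤ 1) (hu : Odd u)
    (hv : 2 ^ (n - 2) ∣ v) : Function.Surjective (endo hn (qy n ^ a * qx n ^ u) hv) := by
  set φ := endo hn (qy n ^ a * qx n ^ u) hv
  have hX : qy n ^ a * qx n ^ u ∈ φ.range := ⟨qx n, lift_qx ..⟩
  have hY : qy n * qx n ^ v ∈ φ.range := ⟨qy n, lift_qy ..⟩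
  -- `φ y ^ a * φ x` is an odd power of `x`, and odd powers of `x` generate `⟨x⟩`.
  have hw : qx n ^ (a * v + u) ∈ φ.range := by
    convert mul_mem (pow_mem hY a) hX using 1
    interval_cases a
    · simp
    · simp only [pow_one, one_mul]
      rw [mul_assoc, ← mul_assoc (qx n ^ v), (commute_qx_pow (by omega) hv _).eq, mul_assoc,
        ← mul_assoc (qy n), ← sq, qy_sq, one_mul, pow_add]
  have hx : qx n ∈ φ.range := by
    have hv2 : Even v := even_iff_two_dvd.2 ((dvd_pow_self 2 (by omega)).trans hv)
    have hcop : (a * v + u).Coprime (orderOf (qx n)) :=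
      ((Nat.coprime_two_right.2 ((hv2.mul_left a).add_odd hu)).pow_right _).coprime_dvd_right
        (orderOf_dvd_of_pow_eq_one qx_pow_two_pow_sub_one)
    obtain ⟨m, hm⟩ := exists_pow_eq_self_of_coprime hcop
    exact hm ▸ pow_mem hw m
  have hy : qy n ∈ φ.range := by simpa using mul_mem hY (inv_mem (pow_mem hx v))
  exact fun g => PresentedGroup.generated_by _ φ.range (fun b => by cases b; exacts [hy, hx]) g

noncomputable def aut (hn : 4 ≤ n) {a u v : ℕ} (ha : a ≤ 1) (hu : Odd u)
    (hv : 2 ^ (n - 2) ∣ v) : MulAut (QA n) :=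
  MulEquiv.ofBijective (endo hn (qy n ^ a * qx n ^ u) hv)
    ⟨Finite.injective_iff_surjective.2 (endo_surjective hn ha hu hv), endo_surjective hn ha hu hv⟩

section aut

variable (hn : 4 ≤ n) {a u v : ℕ} (ha : a ≤ 1) (hu : Odd u) (hv : 2 ^ (n - 2) ∣ v)

@[simp] lemma aut_qx : aut hn ha hu hv (qx n) = qy n ^ a * qx n ^ u := by
  simp [aut, endo]

@[simp] lemma aut_qy : aut hn ha hu hv (qy n) = qy n * qx n ^ v := by
  simp [aut, endo]

end aut

lemma mulAut_ext {ψ ψ' : MulAut (QA n)} (hx : ψ (qx n) = ψ' (qx n))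
    (hy : ψ (qy n) = ψ' (qy n)) : ψ = ψ' :=
  MulEquiv.toMonoidHom_injective (hom_ext hx hy)

lemma existsUnique_mulAut (hn : 4 ≤ n) {a u v : ℕ} (ha : a ≤ 1) (hu : Odd u)
    (hv : 2 ^ (n - 2) ∣ v) :
    ∃! ψ : MulAut (QA n), ψ (qx n) = qy n ^ a * qx n ^ u ∧ ψ (qy n) = qy n * qx n ^ v :=
  ⟨aut hn ha hu hv, ⟨aut_qx .., aut_qy ..⟩, fun _ ⟨hx, hy⟩ =>
    mulAut_ext (hx.trans (aut_qx ..).symm) (hy.trans (aut_qy ..).symm)⟩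

lemma exists_mulAut_eq (hn : 4 ≤ n) (ψ : MulAut (QA n)) :
    ∃ u a v : ℕ, Odd u ∧ u < 2 ^ (n - 1) ∧ a ≤ 1 ∧ (v = 0 ∨ v = 2 ^ (n - 2)) ∧
      ψ (qx n) = qy n ^ a * qx n ^ u ∧ ψ (qy n) = qy n * qx n ^ v := by
  obtain ⟨a, u, ha, hu, hX⟩ := exists_eq_qy_pow_mul_qx_pow (ψ (qx n))
  obtain ⟨b, v, hb, hv, hY⟩ := exists_eq_qy_pow_mul_qx_pow (ψ (qy n))
  have hXs : ψ (qx n) ^ 2 ^ (n - 2) ≠ 1 := by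
    rw [← map_pow, map_ne_one_iff _ ψ.injective, Ne, qx_pow_eq_one_iff (by omega),
      Nat.pow_dvd_pow_iff_le_right (by norm_num)]
    omega
  have hodd : Odd u := by
    rw [← Nat.not_even_iff_odd, ← pow_two_pow_sub_two_eq_one_iff hn ha, ← hX]
    exact hXs
  have hsv : 2 ^ (n - 2) ∣ v :=
    dvd_of_qy_pow_mul_qx_pow_sq_eq_one hn hb (by rw [← hY, ← map_pow, qy_sq, map_one])
  -- A power of `x` with exponent divisible by `2^(n-2)` is central, so `ψ y` cannot be one:
  -- the relation `y x y⁻¹ = x^(2^(n-2)+1)` would give `(ψ x)^(2^(n-2)) = 1`.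
  have hb1 : b = 1 := by
    by_contra hb1
    obtain rfl : b = 0 := by omega
    have hconj := congrArg ψ (qy_mul_qx_mul_qy_inv (n := n))
    rw [map_mul, map_mul, map_inv, map_pow, hY, pow_zero, one_mul,
      (commute_qx_pow (by omega) hsv _).eq, mul_inv_cancel_right, pow_succ'] at hconj
    exact hXs (left_eq_mul.1 hconj)
  refine ⟨u, a, v, hodd, hu, ha, ?_, hX, by rw [hY, hb1, pow_one]⟩
  obtain ⟨c, rfl⟩ := hsv
  rw [Nat.two_pow_sub_one_eq (by omega), mul_comm 2] at hv
  have : c < 2 := Nat.lt_of_mul_lt_mul_left hv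
  interval_cases c <;> simp

noncomputable def autOfFin (hn : 4 ≤ n) (p : Fin (2 ^ (n - 2)) × Fin 2 × Fin 2) :
    MulAut (QA n) :=
  aut hn (a := p.2.1) (u := 2 * p.1 + 1) (v := p.2.2 * 2 ^ (n - 2))
    (Nat.le_of_lt_succ p.2.1.isLt) (odd_two_mul_add_one _) (dvd_mul_left _ _)

lemma autOfFin_bijective (hn : 4 ≤ n) : Function.Bijective (autOfFin (n := n) hn) := by
  have hN := Nat.two_pow_sub_one_eq (n := n) (by omega)
  have hs := Nat.one_le_two_pow (n := n - 2)
  refine ⟨fun ⟨k, a, c⟩ ⟨k', a', c'⟩ h => ?_, fun ψ => ?_⟩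
  · have hx := DFunLike.congr_fun h (qx n)
    have hy := DFunLike.congr_fun h (qy n)
    simp only [autOfFin, aut_qx, aut_qy] at hx hy
    have hcN : ∀ c : Fin 2, (c : ℕ) * 2 ^ (n - 2) < 2 ^ (n - 1) := by
      intro c; fin_cases c <;> simp; omega
    obtain ⟨ha, hk⟩ := eq_of_qy_pow_mul_qx_pow_eq (by omega) (by omega) (by omega)
      (by omega) (by omega) hx
    have hc := (eq_of_qy_pow_mul_qx_pow_eq (n := n) (a := 1) (b := 1) (by omega) le_rfl le_rfl
      (hcN c) (hcN c') (by simpa using hy)).2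
    simp only [Prod.mk.injEq, Fin.ext_iff]
    exact ⟨by omega, ha, Nat.eq_of_mul_eq_mul_right (by omega) hc⟩
  · obtain ⟨u, a, v, ⟨k, rfl⟩, hu, ha, hv, hX, hY⟩ := exists_mulAut_eq hn ψ
    have hk : k < 2 ^ (n - 2) := by omega
    rcases hv with rfl | rfl
    · exact ⟨(⟨k, hk⟩, ⟨a, by omega⟩, 0),
        mulAut_ext (by simp [autOfFin, hX]) (by simp [autOfFin, hY])⟩
    · exact ⟨(⟨k, hk⟩, ⟨a, by omega⟩, 1),
        mulAut_ext (by simp [autOfFin, hX]) (by simp [autOfFin, hY])⟩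

lemma card_mulAut (hn : 4 ≤ n) : Nat.card (MulAut (QA n)) = 2 ^ n := by
  rw [← Nat.card_congr (Equiv.ofBijective _ (autOfFin_bijective hn))]
  simp only [Nat.card_eq_fintype_card, Fintype.card_prod, Fintype.card_fin]
  rw [← pow_two, ← pow_add]
  congr 1
  omega

end QA

/-- For `n ≥ 4`: for each odd `u` with `0 < u < 2^(n-1)`, each `a ∈ {0,1}` and each
`v ∈ {0, 2^(n-2)}`, the assignment `x ↦ y^a x^u`, `y ↦ y x^v` extends to a (unique)
automorphism `ψ_(u,a,v)` of `QA_n`; every automorphism of `QA_n` is of this form;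
these `2^n` automorphisms are pairwise distinct (the parameters are determined by the
images of `x` and `y`); and consequently `Aut(QA_n)` has order `2^n`. -/
theorem stmt8 (n : ℕ) (hn : 4 ≤ n) :
    (∀ u a v : ℕ, Odd u → u < 2 ^ (n - 1) → a ≤ 1 → (v = 0 ∨ v = 2 ^ (n - 2)) →
      ∃! ψ : MulAut (QA n), ψ (qx n) = qy n ^ a * qx n ^ u ∧ ψ (qy n) = qy n * qx n ^ v) ∧
    (∀ ψ : MulAut (QA n), ∃ u a v : ℕ, Odd u ∧ u < 2 ^ (n - 1) ∧ a ≤ 1 ∧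
      (v = 0 ∨ v = 2 ^ (n - 2)) ∧
      ψ (qx n) = qy n ^ a * qx n ^ u ∧ ψ (qy n) = qy n * qx n ^ v) ∧
    (∀ u a v u' a' v' : ℕ, Odd u → u < 2 ^ (n - 1) → a ≤ 1 → (v = 0 ∨ v = 2 ^ (n - 2)) →
      Odd u' → u' < 2 ^ (n - 1) → a' ≤ 1 → (v' = 0 ∨ v' = 2 ^ (n - 2)) →
      qy n ^ a * qx n ^ u = qy n ^ a' * qx n ^ u' → qy n * qx n ^ v = qy n * qx n ^ v' →
      u = u' ∧ a = a' ∧ v = v') ∧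
    Nat.card (MulAut (QA n)) = 2 ^ n := by
  have hdvd : ∀ {v : ℕ}, (v = 0 ∨ v = 2 ^ (n - 2)) → 2 ^ (n - 2) ∣ v := by
    rintro v (rfl | rfl) <;> simp
  have hlt : ∀ {v : ℕ}, (v = 0 ∨ v = 2 ^ (n - 2)) → v < 2 ^ (n - 1) := by
    rintro v (rfl | rfl)
    · positivity
    · exact Nat.pow_lt_pow_right (by norm_num) (by omega)
  refine ⟨fun u a v hu _ ha hv => QA.existsUnique_mulAut hn ha hu (hdvd hv),
    QA.exists_mulAut_eq hn, ?_, QA.card_mulAut hn⟩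
  intro u a v u' a' v' _ hu ha hv _ hu' ha' hv' hX hY
  obtain ⟨rfl, rfl⟩ := QA.eq_of_qy_pow_mul_qx_pow_eq (by omega) ha ha' hu hu' hX
  exact ⟨rfl, rfl, (QA.eq_of_qy_pow_mul_qx_pow_eq (by omega) le_rfl le_rfl (hlt hv) (hlt hv')
    (by simpa using hY)).2⟩
end

section
/- Let n ≥ 4. For all elements d_1, d_2, d_3 of the quasi-abelian group QA_n that lie outside the index-two subgroup H_1 = ⟨x^2, y⟩, one has d_1^2 d_2^2 d_3^2 ≠ 1. -/
namespace Subgroup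

variable {G : Type*} [Group G]

theorem mem_or_inv_mul_mem_of_sq_mem {H : Subgroup G} {g : G} (hg : g ^ 2 ∈ H)
    (hconj : ∀ h ∈ H, g⁻¹ * h * g ∈ H) {S : Set G} (hS : closure S = ⊤)
    (hSH : ∀ s ∈ S, s ∈ H ∨ g⁻¹ * s ∈ H) (d : G) : d ∈ H ∨ g⁻¹ * d ∈ H := by
  -- `H ∪ gH` is a subgroup, and it contains `S`.
  let K : Subgroup G :=
    { carrier := {d | d ∈ H ∨ g⁻¹ * d ∈ H}
      one_mem' := Or.inl H.one_mem
      mul_mem' := by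
        rintro a b (ha | ha) (hb | hb)
        · exact Or.inl (mul_mem ha hb)
        · refine Or.inr ?_
          rw [show g⁻¹ * (a * b) = g⁻¹ * a * g * (g⁻¹ * b) by group]
          exact mul_mem (hconj a ha) hb
        · refine Or.inr ?_
          rw [← mul_assoc]
          exact mul_mem ha hb
        · refine Or.inl ?_
          rw [show a * b = g ^ 2 * (g⁻¹ * (g⁻¹ * a) * g) * (g⁻¹ * b) by group]
          exact mul_mem (mul_mem hg (hconj _ ha)) hb
      inv_mem' := by
        rintro a (ha | ha)
        · exact Or.inl (inv_mem ha)
        · refine Or.inr ?_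
          rw [show g⁻¹ * a⁻¹ = g⁻¹ * (g⁻¹ * a)⁻¹ * g * (g ^ 2)⁻¹ by group]
          exact mul_mem (hconj _ (inv_mem ha)) (inv_mem hg) }
  have hK : closure S ≤ K := (closure_le K).2 hSH
  exact hK (hS ▸ mem_top d)

end Subgroup

namespace QuasiAbelian

variable {n : ℕ}

theorem qy_mul_qx : qy n * qx n = qx n ^ (2 ^ (n - 2) + 1) * qy n := by
  have h := PresentedGroup.one_of_mem (rels := qaRels n)
    (Set.mem_insert_of_mem _ (Set.mem_insert_of_mem _ rfl))
  change qy n * qx n * (qy n)⁻¹ * (qx n ^ (2 ^ (n - 2) + 1))⁻¹ = 1 at h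
  rw [← mul_inv_eq_one.mp h]
  group

theorem qx_sq_mem_H1 : qx n ^ 2 ∈ H1 n := Subgroup.subset_closure (Set.mem_insert _ _)

theorem qy_mem_H1 : qy n ∈ H1 n := Subgroup.subset_closure (Set.mem_insert_of_mem _ rfl)

theorem inv_qx_mul_mul_qx_mem_H1 (hn : 3 ≤ n) {h : QA n} (hh : h ∈ H1 n) :
    (qx n)⁻¹ * h * qx n ∈ H1 n := by
  suffices H1 n ≤ (H1 n).comap (MulAut.conj (qx n)⁻¹).toMonoidHom by simpa using this hh
  refine (Subgroup.closure_le _).2 ?_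
  rintro _ (rfl | rfl)
  · simpa [show (qx n)⁻¹ * qx n ^ 2 * qx n = qx n ^ 2 by group] using qx_sq_mem_H1
  · obtain ⟨k, hk⟩ : ∃ k, 2 ^ (n - 2) = 2 * k := ⟨2 ^ (n - 3), by rw [← pow_succ']; congr 1; omega⟩
    have : (qx n)⁻¹ * qy n * qx n = (qx n ^ 2) ^ k * qy n := by
      rw [mul_assoc, qy_mul_qx, ← pow_mul, ← hk]; group
    simpa [this] using mul_mem (pow_mem qx_sq_mem_H1 k) qy_mem_H1

theorem mem_H1_or_inv_qx_mul_mem_H1 (hn : 3 ≤ n) (d : QA n) :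
    d ∈ H1 n ∨ (qx n)⁻¹ * d ∈ H1 n := by
  refine Subgroup.mem_or_inv_mul_mem_of_sq_mem qx_sq_mem_H1 (fun _ ↦ inv_qx_mul_mul_qx_mem_H1 hn)
    (PresentedGroup.closure_range_of _) ?_ d
  rintro _ ⟨_ | _, rfl⟩
  · exact Or.inl qy_mem_H1
  · exact Or.inr (by simp [qx])

open Multiplicative in
noncomputable def toZMod4 (hn : 4 ≤ n) : QA n →* Multiplicative (ZMod 4) :=
  PresentedGroup.toGroup (f := fun b ↦ if b then ofAdd 1 else 1) <| by
    have hpow : ∀ k, 2 ≤ k → (ofAdd 1 : Multiplicative (ZMod 4)) ^ 2 ^ k = 1 := fun k hk ↦ by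
      rw [show 2 ^ k = 4 * 2 ^ (k - 2) by rw [← pow_sub_mul_pow 2 hk]; ring, pow_mul]
      simp [show (ofAdd 1 : Multiplicative (ZMod 4)) ^ 4 = 1 by decide]
    rintro _ (rfl | rfl | rfl)
    · simpa using hpow (n - 1) (by omega)
    · simp
    · simp [pow_succ, hpow (n - 2) (by omega)]

theorem toZMod4_qx (hn : 4 ≤ n) : toZMod4 hn (qx n) = Multiplicative.ofAdd 1 :=
  PresentedGroup.toGroup.of _

theorem toZMod4_qy (hn : 4 ≤ n) : toZMod4 hn (qy n) = 1 :=
  PresentedGroup.toGroup.of _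

theorem toZMod4_sq_of_mem_H1 (hn : 4 ≤ n) {h : QA n} (hh : h ∈ H1 n) : toZMod4 hn h ^ 2 = 1 := by
  suffices H1 n ≤ ((powMonoidHom 2).comp (toZMod4 hn)).ker from this hh
  refine (Subgroup.closure_le _).2 ?_
  rintro _ (rfl | rfl)
  · rw [SetLike.mem_coe, MonoidHom.mem_ker, MonoidHom.comp_apply, map_pow, toZMod4_qx]
    decide
  · simp [toZMod4_qy]

theorem toZMod4_sq_of_not_mem_H1 (hn : 4 ≤ n) {d : QA n} (hd : d ∉ H1 n) :
    toZMod4 hn (d ^ 2) = Multiplicative.ofAdd 2 := by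
  have hxd := (mem_H1_or_inv_qx_mul_mem_H1 (by omega) d).resolve_left hd
  calc toZMod4 hn (d ^ 2) = toZMod4 hn (qx n) ^ 2 * toZMod4 hn ((qx n)⁻¹ * d) ^ 2 := by
        rw [← mul_pow, ← map_mul, mul_inv_cancel_left, map_pow]
    _ = Multiplicative.ofAdd 2 := by
        rw [toZMod4_sq_of_mem_H1 hn hxd, toZMod4_qx, mul_one]; rfl

end QuasiAbelian

/-- For `n ≥ 4` and all `d₁, d₂, d₃ ∈ QA_n \ H₁`, one has `d₁² d₂² d₃² ≠ 1`. -/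
theorem stmt14 (n : ℕ) (hn : 4 ≤ n) (d₁ d₂ d₃ : QA n)
    (h₁ : d₁ ∉ H1 n) (h₂ : d₂ ∉ H1 n) (h₃ : d₃ ∉ H1 n) :
    d₁ ^ 2 * d₂ ^ 2 * d₃ ^ 2 ≠ 1 := by
  intro h
  have := congrArg (QuasiAbelian.toZMod4 hn) h
  rw [map_mul, map_mul, QuasiAbelian.toZMod4_sq_of_not_mem_H1 hn h₁, QuasiAbelian.toZMod4_sq_of_not_mem_H1 hn h₂,
    QuasiAbelian.toZMod4_sq_of_not_mem_H1 hn h₃, map_one] at this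
  exact absurd this (by decide)
end

section
/- For every integer n ≥ 4, the group K_n = ⟨a, b ∣ a^8 = 1, b^{2^{n-2}} = a^4, b a b^{-1} = a^α⟩ (with α = −1 for n even and α = 3 for n odd) has order exactly 2^{n+1}; moreover the element a has order 8 and the element b has order 2^{n-1}. -/
/-!
The subgroup `⟨a⟩` is normal, because `b` conjugates `a` to `a^α` and `α² ≡ 1 (mod 8)`. The
quotient `K_n/⟨a⟩` is cyclic, generated by the image of `b`, whose `2^(n-2)`-th power lies in
`⟨a⟩`; it maps onto `ℤ/2^(n-2)` by `a ↦ 0, b ↦ 1`, so it has order exactly `2^(n-2)` and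
`|K_n| = 2^(n-2) · ord a`. Everything therefore rests on `a^4 ≠ 1`: it gives `ord a = 8`, and
`b^(2^(n-2)) = a^4`, `b^(2^(n-1)) = a^8 = 1` give `ord b = 2^(n-1)`.

To see `a^4 ≠ 1`, let `K_n` act on `C × C`, `C = ℤ/2^(n+1)` (the monomial representation
induced from `⟨a, b²⟩`): `a` acts as translation by `(ζ, αζ)` with `ζ = 2^(n-2)` of order
`8`, and `b` as the twisted swap `(u, v) ↦ (v, u + 8)`, whose square is translation by `(8, 8)`.
Then `a^4` is translation by `(4ζ, 4ζ) ≠ 0`.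
-/

/-- The exponent `α` in the presentation of `K_n`: `α = -1` for `n` even, `α = 3` for
`n` odd. -/
def kAlpha (n : ℕ) : ℤ := if Even n then -1 else 3

/-- The relators of the group `K_n`:
`a^8 = 1`, `b^(2^(n-2)) = a^4`, `b * a * b⁻¹ = a^α`.
The generator `a` is encoded by `true` and `b` by `false`. -/
def kRels (n : ℕ) : Set (FreeGroup Bool) :=
  {FreeGroup.of true ^ 8,
   FreeGroup.of false ^ 2 ^ (n - 2) * (FreeGroup.of true ^ 4)⁻¹,
   FreeGroup.of false * FreeGroup.of true * (FreeGroup.of false)⁻¹ *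
     (FreeGroup.of true ^ kAlpha n)⁻¹}

/-- The group `K_n`, given by the presentation
`⟨a, b ∣ a^8 = 1, b^(2^(n-2)) = a^4, b a b⁻¹ = a^α⟩`, where `α = -1` if `n` is even
and `α = 3` if `n` is odd. -/
abbrev K (n : ℕ) : Type := PresentedGroup (kRels n)

/-- The generator `a` of `K_n`. -/
def ka (n : ℕ) : K n := PresentedGroup.of true

/-- The generator `b` of `K_n`. -/
def kb (n : ℕ) : K n := PresentedGroup.of false

open Subgroup Multiplicative

section Generation

variable {G : Type*} [Group G] {x y : G}

lemma zpowers_normal_of_conj {k l : ℤ} (hgen : closure {x, y} = ⊤)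
    (hk : y * x * y⁻¹ = x ^ k) (hl : y⁻¹ * x * y = x ^ l) : (zpowers x).Normal := by
  have hy : y ∈ normalizer (zpowers x : Set G) := by
    refine mem_normalizer_iff.2 fun h => ⟨?_, ?_⟩
    · intro hh
      obtain ⟨m, rfl⟩ := mem_zpowers_iff.1 hh
      exact mem_zpowers_iff.2 ⟨k * m, by rw [zpow_mul, ← hk, conj_zpow]⟩
    · intro hh
      obtain ⟨m, hm⟩ := mem_zpowers_iff.1 hh
      refine mem_zpowers_iff.2 ⟨l * m, ?_⟩
      have hconj : (y⁻¹ * x * y) ^ m = y⁻¹ * x ^ m * y := by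
        simpa using conj_zpow (i := m) (a := y⁻¹) (b := x)
      rw [zpow_mul, ← hl, hconj, hm]
      group
  rw [← normalizer_eq_top_iff, eq_top_iff, ← hgen, closure_le]
  rintro g (rfl | rfl)
  exacts [le_normalizer (mem_zpowers g), hy]

lemma zpowers_mk_eq_top {N : Subgroup G} [N.Normal] (hgen : closure {x, y} = ⊤) (hx : x ∈ N) :
    zpowers (y : G ⧸ N) = ⊤ := by
  rw [eq_top_iff, ← map_top_of_surjective _ (QuotientGroup.mk'_surjective N), ← hgen,
    MonoidHom.map_closure, closure_le]
  rintro _ ⟨g, rfl | rfl, rfl⟩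
  · rw [SetLike.mem_coe, QuotientGroup.mk'_apply, (QuotientGroup.eq_one_iff _).2 hx]
    exact one_mem _
  · exact mem_zpowers _

end Generation

section AffineModel

variable {C : Type*} [AddCommGroup C]

abbrev translation : Multiplicative (C × C) →* Equiv.Perm (C × C) := MulAction.toPermHom _ _

def twistedSwap (η : C) : Equiv.Perm (C × C) :=
  (Equiv.prodComm C C).trans (Equiv.addRight (0, η))

lemma twistedSwap_sq (η : C) : twistedSwap η ^ 2 = translation (ofAdd (η, η)) := by
  ext ⟨u, v⟩ <;> simp [twistedSwap, sq, add_comm]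

lemma twistedSwap_conj_translation (η u v : C) :
    twistedSwap η * translation (ofAdd (u, v)) * (twistedSwap η)⁻¹ =
      translation (ofAdd (v, u)) := by
  rw [mul_inv_eq_iff_eq_mul]
  ext ⟨p, q⟩ <;> simp [twistedSwap, add_assoc]

end AffineModel

section KGroup

variable {n : ℕ}

lemma ka_pow_eight : ka n ^ 8 = 1 := by
  simpa [ka, PresentedGroup.of] using
    PresentedGroup.one_of_mem (rels := kRels n) (Set.mem_insert _ _)

lemma kb_pow : kb n ^ 2 ^ (n - 2) = ka n ^ 4 := by
  have := PresentedGroup.one_of_mem (rels := kRels n)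
    (Set.mem_insert_of_mem _ (Set.mem_insert _ _))
  simpa [ka, kb, PresentedGroup.of, mul_inv_eq_one] using this

lemma kb_conj_ka : kb n * ka n * (kb n)⁻¹ = ka n ^ kAlpha n := by
  have := PresentedGroup.one_of_mem (rels := kRels n)
    (Set.mem_insert_of_mem _ (Set.mem_insert_of_mem _ rfl))
  simpa [ka, kb, PresentedGroup.of, mul_inv_eq_one] using this

lemma closure_ka_kb : closure {ka n, kb n} = ⊤ := by
  rw [← PresentedGroup.closure_range_of]
  congr 1
  ext g
  simp [ka, kb, or_comm]

lemma kAlpha_eq_neg_one_or_three : kAlpha n = -1 ∨ kAlpha n = 3 := by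
  unfold kAlpha
  split_ifs <;> simp

section KAlpha

variable {G : Type*} [Group G] {x : G}

lemma zpow_kAlpha_mul_self (h8 : x ^ 8 = 1) : x ^ (kAlpha n * kAlpha n) = x := by
  rcases kAlpha_eq_neg_one_or_three (n := n) with h | h <;> rw [h]
  · simp
  · rw [show (3 : ℤ) * 3 = 8 + 1 by norm_num, zpow_add, zpow_one]
    simp [h8]

variable {R : Type*} [CommRing R] {ζ : R}

lemma kAlpha_mul_kAlpha_mul (h8 : 8 * ζ = 0) : (kAlpha n : R) * (kAlpha n * ζ) = ζ := by
  rcases kAlpha_eq_neg_one_or_three (n := n) with h | h <;> rw [h] <;> push_cast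
  · ring
  · linear_combination h8

lemma four_mul_kAlpha_mul (h8 : 8 * ζ = 0) : 4 * ((kAlpha n : R) * ζ) = 4 * ζ := by
  rcases kAlpha_eq_neg_one_or_three (n := n) with h | h <;> rw [h] <;> push_cast
  · linear_combination -h8
  · linear_combination h8

end KAlpha

section Lift

variable {G : Type*} [Group G] {x y : G}

def kLift (h8 : x ^ 8 = 1) (hpow : y ^ 2 ^ (n - 2) = x ^ 4)
    (hconj : y * x * y⁻¹ = x ^ kAlpha n) : K n →* G :=
  PresentedGroup.toGroup (f := fun i => if i then x else y) <| by
    rintro r (rfl | rfl | rfl) <;> simp [h8, hpow, hconj]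

variable (h8 : x ^ 8 = 1) (hpow : y ^ 2 ^ (n - 2) = x ^ 4) (hconj : y * x * y⁻¹ = x ^ kAlpha n)

@[simp] lemma kLift_ka : kLift h8 hpow hconj (ka n) = x := PresentedGroup.toGroup.of _
@[simp] lemma kLift_kb : kLift h8 hpow hconj (kb n) = y := PresentedGroup.toGroup.of _

end Lift

lemma exists_perm_model_pow_four_ne_one (hn : 3 ≤ n) :
    ∃ x y : Equiv.Perm (ZMod (2 ^ (n + 1)) × ZMod (2 ^ (n + 1))),
      x ^ 8 = 1 ∧ y ^ 2 ^ (n - 2) = x ^ 4 ∧ y * x * y⁻¹ = x ^ kAlpha n ∧ x ^ 4 ≠ 1 := by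
  obtain ⟨m, rfl⟩ : ∃ m, n = m + 3 := ⟨n - 3, by omega⟩
  obtain ⟨ζ, hζ⟩ : ∃ ζ : ZMod (2 ^ (m + 3 + 1)), ζ = 2 ^ (m + 1) := ⟨_, rfl⟩
  have hζ8 : 8 * ζ = 0 := by
    rw [← ZMod.natCast_self (2 ^ (m + 3 + 1)), hζ]; push_cast; ring
  have hζ4 : 4 * ζ ≠ 0 := by
    rw [hζ, show (4 : ZMod (2 ^ (m + 3 + 1))) * 2 ^ (m + 1) = ((2 ^ (m + 3) : ℕ) : ZMod _) by
      push_cast; ring, ne_eq, ZMod.natCast_eq_zero_iff, Nat.pow_dvd_pow_iff_le_right (by norm_num)]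
    omega
  have hαα := kAlpha_mul_kAlpha_mul (n := m + 3) hζ8
  have hα4 := four_mul_kAlpha_mul (n := m + 3) hζ8
  set α : ZMod (2 ^ (m + 3 + 1)) := ((kAlpha (m + 3) : ℤ) : ZMod (2 ^ (m + 3 + 1)))
  have hpow (k : ℕ) :
      translation (ofAdd (ζ, α * ζ)) ^ k = translation (ofAdd (k * ζ, k * (α * ζ))) := by
    rw [← map_pow, ← ofAdd_nsmul, Prod.smul_mk, nsmul_eq_mul, nsmul_eq_mul]
  refine ⟨translation (ofAdd (ζ, α * ζ)), twistedSwap 8, ?_, ?_, ?_, ?_⟩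
  · rw [hpow]
    push_cast
    rw [mul_left_comm, hζ8, mul_zero, Prod.mk_zero_zero, ofAdd_zero, map_one]
  · rw [show 2 ^ (m + 3 - 2) = 2 * 2 ^ m by rw [← pow_succ']; congr 1, pow_mul, twistedSwap_sq,
      ← map_pow, ← ofAdd_nsmul, hpow, Prod.smul_mk, nsmul_eq_mul]
    push_cast
    rw [hα4, hζ]
    ring_nf
  · rw [twistedSwap_conj_translation, ← map_zpow, ← ofAdd_zsmul, Prod.smul_mk, zsmul_eq_mul,
      zsmul_eq_mul, hαα]
  · rw [hpow]
    intro h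
    exact hζ4 (by simpa using congrArg (fun g => (g (0, 0)).1) h)

lemma ka_pow_four_ne_one (hn : 3 ≤ n) : ka n ^ 4 ≠ 1 := by
  obtain ⟨x, y, h8, hpow, hconj, hx4⟩ := exists_perm_model_pow_four_ne_one hn
  intro h
  exact hx4 (by simpa using congrArg (kLift h8 hpow hconj) h)

lemma orderOf_ka (hn : 3 ≤ n) : orderOf (ka n) = 8 :=
  orderOf_eq_prime_pow (p := 2) (n := 2) (ka_pow_four_ne_one hn) ka_pow_eight

lemma orderOf_kb (hn : 3 ≤ n) : orderOf (kb n) = 2 ^ (n - 1) := by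
  rw [show n - 1 = n - 2 + 1 by omega]
  refine orderOf_eq_prime_pow ?_ ?_
  · rw [kb_pow]
    exact ka_pow_four_ne_one hn
  · rw [pow_succ, pow_mul, kb_pow, ← pow_mul]
    exact ka_pow_eight

lemma kb_inv_conj_ka : (kb n)⁻¹ * ka n * kb n = ka n ^ kAlpha n := by
  have h : kb n * ka n ^ kAlpha n * (kb n)⁻¹ = ka n := by
    rw [← conj_zpow, kb_conj_ka, ← zpow_mul, zpow_kAlpha_mul_self ka_pow_eight]
  conv_lhs => rw [← h]
  group

instance zpowers_ka_normal : (zpowers (ka n)).Normal :=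
  zpowers_normal_of_conj closure_ka_kb kb_conj_ka kb_inv_conj_ka

lemma card_quotient_zpowers_ka : Nat.card (K n ⧸ zpowers (ka n)) = 2 ^ (n - 2) := by
  have hgen : ∀ q, q ∈ zpowers (kb n : K n ⧸ zpowers (ka n)) := by
    simp [zpowers_mk_eq_top closure_ka_kb (mem_zpowers (ka n))]
  rw [← orderOf_eq_card_of_forall_mem_zpowers hgen]
  apply Nat.dvd_antisymm
  · apply orderOf_dvd_of_pow_eq_one
    rw [← QuotientGroup.mk_pow, kb_pow, QuotientGroup.eq_one_iff]
    exact pow_mem (mem_zpowers _) _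
  · have hpow : ofAdd (1 : ZMod (2 ^ (n - 2))) ^ 2 ^ (n - 2) = 1 ^ 4 := by
      rw [← ofAdd_nsmul, nsmul_one, ZMod.natCast_self, ofAdd_zero, one_pow]
    let φ := kLift (n := n) (one_pow 8) hpow (by simp)
    have hφ : zpowers (ka n) ≤ φ.ker := by
      rw [zpowers_le, MonoidHom.mem_ker, kLift_ka]
    have := orderOf_map_dvd (QuotientGroup.lift _ φ hφ) (kb n : K n ⧸ zpowers (ka n))
    rwa [QuotientGroup.lift_mk, kLift_kb, orderOf_ofAdd_eq_addOrderOf, ZMod.addOrderOf_one] at this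

end KGroup

/-- For `n ≥ 4`, the group `K_n` has order exactly `2^(n+1)`; moreover `a` has order `8`
and `b` has order `2^(n-1)`. -/
theorem stmt16 (n : ℕ) (hn : 4 ≤ n) :
    Nat.card (K n) = 2 ^ (n + 1) ∧ orderOf (ka n) = 8 ∧ orderOf (kb n) = 2 ^ (n - 1) := by
  have hn3 : 3 ≤ n := by omega
  refine ⟨?_, orderOf_ka hn3, orderOf_kb hn3⟩
  rw [card_eq_card_quotient_mul_card_subgroup (zpowers (ka n)), card_quotient_zpowers_ka,
    Nat.card_zpowers, orderOf_ka hn3, show 8 = 2 ^ 3 by rfl, ← pow_add]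
  congr 1
  omega
end
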